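/- If G is an outerplanar graph, then F(G) is triangle-free, i.e., ω(F(G)) ≤ 2. -/
import Mathlib


open SimpleGraph

variable {V : Type*}

/-- Four distinct vertices forming a 4-cycle in `G`. -/
def IsC4 (G : SimpleGraph V) (a b c d : V) : Prop :=
  a ≠ b ∧ a ≠ c ∧ a ≠ d ∧ b ≠ c ∧ b ≠ d ∧ c ≠ d ∧
    G.Adj a b ∧ G.Adj b c ∧ G.Adj c d ∧ G.Adj d a

/-- A proper edge coloring of `G` in which every 4-cycle is rainbow. -/
def IsBColoring (G : SimpleGraph V) {α : Type*} (C : Sym2 V → α) : Prop :=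
  (∀ a b c : V, G.Adj a b → G.Adj a c → b ≠ c → C s(a, b) ≠ C s(a, c)) ∧
  (∀ a b c d : V, IsC4 G a b c d →
    C s(a, b) ≠ C s(b, c) ∧ C s(a, b) ≠ C s(c, d) ∧ C s(a, b) ≠ C s(d, a) ∧
    C s(b, c) ≠ C s(c, d) ∧ C s(b, c) ≠ C s(d, a) ∧ C s(c, d) ≠ C s(d, a))

/-- The minimum number of colors in a B-coloring of `G`. -/
noncomputable def qB (G : SimpleGraph V) : ℕ :=
  sInf {n | ∃ C : Sym2 V → Fin n, IsBColoring G C}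

/-- `e` and `f` are opposite edges of some 4-cycle of `G`. -/
def OppC4 (G : SimpleGraph V) (e f : Sym2 V) : Prop :=
  ∃ a b c d : V, IsC4 G a b c d ∧ e = s(a, b) ∧ f = s(c, d)

/-- Two edges (as unordered pairs) share no vertex. -/
def EdgeDisjoint (e f : Sym2 V) : Prop := ∀ v : V, v ∈ e → v ∉ f

/-- The graph `F(G)` on the edges of `G`: two vertex-disjoint edges are adjacent
iff they are opposite edges of a 4-cycle of `G`. -/
def Fgraph (G : SimpleGraph V) : SimpleGraph G.edgeSet :=
  SimpleGraph.fromRel fun e f =>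
    EdgeDisjoint (e : Sym2 V) (f : Sym2 V) ∧ OppC4 G (e : Sym2 V) (f : Sym2 V)

/-- The extended line graph `L⁺(G)`: edges of `G` are adjacent if they share an
endpoint or are opposite edges of a 4-cycle of `G`. -/
def Lplus (G : SimpleGraph V) : SimpleGraph G.edgeSet :=
  SimpleGraph.fromRel fun e f =>
    (∃ v : V, v ∈ (e : Sym2 V) ∧ v ∈ (f : Sym2 V)) ∨ OppC4 G (e : Sym2 V) (f : Sym2 V)

/-- `H` is a minor of `G`, via branch sets. -/
def HasMinor {W : Type*} (G : SimpleGraph V) (H : SimpleGraph W) : Prop :=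
  ∃ B : W → Set V,
    (∀ w, (G.induce (B w)).Connected) ∧
    (∀ w₁ w₂, w₁ ≠ w₂ → Disjoint (B w₁) (B w₂)) ∧
    (∀ w₁ w₂, H.Adj w₁ w₂ → ∃ v₁ ∈ B w₁, ∃ v₂ ∈ B w₂, G.Adj v₁ v₂)

/-- Planarity via Wagner's theorem: no `K₅` minor and no `K₃,₃` minor. -/
def IsPlanar (G : SimpleGraph V) : Prop :=
  ¬ HasMinor G (completeGraph (Fin 5)) ∧
    ¬ HasMinor G (completeBipartiteGraph (Fin 3) (Fin 3))

/-- Outerplanarity: no `K₄` minor and no `K₂,₃` minor. -/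
def IsOuterplanar (G : SimpleGraph V) : Prop :=
  ¬ HasMinor G (completeGraph (Fin 4)) ∧
    ¬ HasMinor G (completeBipartiteGraph (Fin 2) (Fin 3))

/-- `G` is 2-connected: at least 3 vertices and removing any vertex leaves it connected. -/
def IsTwoConnected (G : SimpleGraph V) : Prop :=
  3 ≤ Nat.card V ∧ ∀ v : V, (G.induce {u | u ≠ v}).Connected

/-- `K₄` minus one edge, on `Fin 4` (the edge between `2` and `3` removed). -/
def K4e : SimpleGraph (Fin 4) :=
  SimpleGraph.fromRel fun x y => s(x, y) ≠ s((2 : Fin 4), (3 : Fin 4))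

/-- The chromatic index: minimum number of colors in a proper edge coloring. -/
noncomputable def chromIndex (G : SimpleGraph V) : ℕ :=
  sInf {n | ∃ C : Sym2 V → Fin n,
    ∀ a b c : V, G.Adj a b → G.Adj a c → b ≠ c → C s(a, b) ≠ C s(a, c)}

/-- `K₆` minus a perfect matching, on `Fin 6` (the matching `01, 23, 45` removed). -/
def K6mM : SimpleGraph (Fin 6) :=
  SimpleGraph.fromRel fun x y => (x : ℕ) / 2 ≠ (y : ℕ) / 2

/-- A path `v₀v₁v₂v₃` together with a vertex `4` adjacent to all four path vertices. -/
def FanGraph : SimpleGraph (Fin 5) :=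
  SimpleGraph.fromRel fun x y =>
    ((x : ℕ) + 1 = (y : ℕ) ∧ (y : ℕ) ≤ 3) ∨ (x : ℕ) = 4



lemma EdgeDisjoint.symm' {e f : Sym2 V} (h : EdgeDisjoint e f) : EdgeDisjoint f e :=
  fun v hv hv' => h v hv' hv

lemma OppC4.symm' {G : SimpleGraph V} {e f : Sym2 V} (h : OppC4 G e f) : OppC4 G f e := by
  obtain ⟨a, b, c, d, ⟨h1, h2, h3, h4, h5, h6, e1, e2, e3, e4⟩, he, hf⟩ := h
  exact ⟨c, d, a, b, ⟨h6, h2.symm, h4.symm, h3.symm, h5.symm, h1, e3, e4, e1, e2⟩, hf, he⟩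

lemma oppC4_matching {G : SimpleGraph V} {a b c d : V} (h : OppC4 G s(a, b) s(c, d)) :
    G.Adj a b ∧ G.Adj c d ∧ ((G.Adj a c ∧ G.Adj b d) ∨ (G.Adj a d ∧ G.Adj b c)) := by
  obtain ⟨p, q, r, s, ⟨_, _, _, _, _, _, e1, e2, e3, e4⟩, he, hf⟩ := h
  rw [Sym2.eq_iff] at he hf
  rcases he with ⟨rfl, rfl⟩ | ⟨rfl, rfl⟩ <;> rcases hf with ⟨rfl, rfl⟩ | ⟨rfl, rfl⟩
  · exact ⟨e1, e3, Or.inr ⟨e4.symm, e2⟩⟩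
  · exact ⟨e1, e3.symm, Or.inl ⟨e4.symm, e2⟩⟩
  · exact ⟨e1.symm, e3, Or.inl ⟨e2, e4.symm⟩⟩
  · exact ⟨e1.symm, e3.symm, Or.inr ⟨e2, e4.symm⟩⟩

lemma edgeDisjoint_ne {a b c d : V} (h : EdgeDisjoint s(a, b) s(c, d)) :
    a ≠ c ∧ a ≠ d ∧ b ≠ c ∧ b ≠ d := by
  simp only [EdgeDisjoint, Sym2.mem_iff] at h
  exact ⟨fun h' => h a (Or.inl rfl) (Or.inl h'), fun h' => h a (Or.inl rfl) (Or.inr h'),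
    fun h' => h b (Or.inr rfl) (Or.inl h'), fun h' => h b (Or.inr rfl) (Or.inr h')⟩

lemma fgraph_adj_elim {G : SimpleGraph V} {e f : G.edgeSet} (h : (Fgraph G).Adj e f) :
    EdgeDisjoint (e : Sym2 V) (f : Sym2 V) ∧ OppC4 G (e : Sym2 V) (f : Sym2 V) := by
  rw [Fgraph, SimpleGraph.fromRel_adj] at h
  rcases h.2 with ⟨hd, ho⟩ | ⟨hd, ho⟩
  · exact ⟨hd, ho⟩
  · exact ⟨hd.symm', ho.symm'⟩

lemma connected_induce_singleton (G : SimpleGraph V) (a : V) :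
    (G.induce ({a} : Set V)).Connected := by
  rw [SimpleGraph.connected_iff]
  refine ⟨fun u v => ?_, ⟨⟨a, rfl⟩⟩⟩
  have hu : (u : V) = a := u.2
  have hv : (v : V) = a := v.2
  rw [Subtype.ext (hu.trans hv.symm)]

lemma connected_induce_pair {G : SimpleGraph V} {a b : V} (h : G.Adj a b) :
    (G.induce ({a, b} : Set V)).Connected := by
  rw [SimpleGraph.connected_iff]
  refine ⟨fun u v => ?_, ⟨⟨a, by simp⟩⟩⟩
  have key : ∀ w : ({a, b} : Set V), w = (⟨a, by simp⟩ : ({a, b} : Set V)) ∨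
      w = (⟨b, by simp⟩ : ({a, b} : Set V)) := by
    rintro ⟨w, hw⟩
    rcases hw with rfl | rfl
    · exact Or.inl rfl
    · exact Or.inr rfl
  have hadj : (G.induce ({a, b} : Set V)).Adj ⟨a, by simp⟩ ⟨b, by simp⟩ := by
    simpa using h
  rcases key u with rfl | rfl <;> rcases key v with rfl | rfl
  · exact SimpleGraph.Reachable.refl _
  · exact hadj.reachable
  · exact hadj.symm.reachable
  · exact SimpleGraph.Reachable.refl _

theorem Fgraph_cliqueFree_of_outerplanar {V : Type*} [Fintype V] (G : SimpleGraph V)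
    (hG : IsOuterplanar G) : (Fgraph G).CliqueFree 3 := by
  classical
  intro t ht
  obtain ⟨e, f, g, hef, heg, hfg, rfl⟩ := Finset.card_eq_three.mp ht.2
  have A12 := fgraph_adj_elim (ht.1 (by simp) (by simp) hef)
  have A13 := fgraph_adj_elim (ht.1 (by simp) (by simp) heg)
  have A23 := fgraph_adj_elim (ht.1 (by simp) (by simp) hfg)
  obtain ⟨a, b, hab⟩ : ∃ a b, (e : Sym2 V) = s(a, b) := by
    induction (e : Sym2 V) using Sym2.ind with | _ x y => exact ⟨x, y, rfl⟩
  obtain ⟨c, d, hcd⟩ : ∃ c d, (f : Sym2 V) = s(c, d) := by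
    induction (f : Sym2 V) using Sym2.ind with | _ x y => exact ⟨x, y, rfl⟩
  obtain ⟨x, y, hxy⟩ : ∃ x y, (g : Sym2 V) = s(x, y) := by
    induction (g : Sym2 V) using Sym2.ind with | _ x y => exact ⟨x, y, rfl⟩
  rw [hab, hcd] at A12
  rw [hab, hxy] at A13
  rw [hcd, hxy] at A23
  obtain ⟨D12, O12⟩ := A12
  obtain ⟨D13, O13⟩ := A13
  obtain ⟨D23, O23⟩ := A23
  obtain ⟨Eab, Ecd, M12⟩ := oppC4_matching O12
  obtain ⟨-, Exy, M13⟩ := oppC4_matching O13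
  obtain ⟨-, -, M23⟩ := oppC4_matching O23
  obtain ⟨hac, had, hbc, hbd⟩ := edgeDisjoint_ne D12
  obtain ⟨hax, hay, hbx, hby⟩ := edgeDisjoint_ne D13
  obtain ⟨hcx, hcy, hdx, hdy⟩ := edgeDisjoint_ne D23
  have hab' := Eab.ne
  have hcd' := Ecd.ne
  have hxy' := Exy.ne
  -- Build a K₄ minor with branch sets {a,b}, {c,d}, {x}, {y}
  apply hG.1
  refine ⟨![{a, b}, {c, d}, {x}, {y}], ?_, ?_, ?_⟩
  · intro w
    fin_cases w
    · exact connected_induce_pair Eab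
    · exact connected_induce_pair Ecd
    · exact connected_induce_singleton G x
    · exact connected_induce_singleton G y
  · intro w₁ w₂ hne
    have hac' := hac.symm; have had' := had.symm; have hbc' := hbc.symm
    have hbd' := hbd.symm; have hax' := hax.symm; have hay' := hay.symm
    have hbx' := hbx.symm; have hby' := hby.symm; have hcx' := hcx.symm
    have hcy' := hcy.symm; have hdx' := hdx.symm; have hdy' := hdy.symm
    have hba := hab'.symm; have hdc := hcd'.symm; have hyx := hxy'.symm
    fin_cases w₁ <;> fin_cases w₂ <;>
      simp_all [Set.disjoint_left, Set.mem_insert_iff, Set.mem_singleton_iff]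
  · intro w₁ w₂ hw
    have L12 : ∃ v₁ ∈ ({a, b} : Set V), ∃ v₂ ∈ ({c, d} : Set V), G.Adj v₁ v₂ := by
      rcases M12 with ⟨h, -⟩ | ⟨h, -⟩
      · exact ⟨a, by simp, c, by simp, h⟩
      · exact ⟨a, by simp, d, by simp, h⟩
    have L13 : ∃ v₁ ∈ ({a, b} : Set V), ∃ v₂ ∈ ({x} : Set V), G.Adj v₁ v₂ := by
      rcases M13 with ⟨h, -⟩ | ⟨-, h⟩
      · exact ⟨a, by simp, x, by simp, h⟩
      · exact ⟨b, by simp, x, by simp, h⟩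
    have L14 : ∃ v₁ ∈ ({a, b} : Set V), ∃ v₂ ∈ ({y} : Set V), G.Adj v₁ v₂ := by
      rcases M13 with ⟨-, h⟩ | ⟨h, -⟩
      · exact ⟨b, by simp, y, by simp, h⟩
      · exact ⟨a, by simp, y, by simp, h⟩
    have L23 : ∃ v₁ ∈ ({c, d} : Set V), ∃ v₂ ∈ ({x} : Set V), G.Adj v₁ v₂ := by
      rcases M23 with ⟨h, -⟩ | ⟨-, h⟩
      · exact ⟨c, by simp, x, by simp, h⟩
      · exact ⟨d, by simp, x, by simp, h⟩
    have L24 : ∃ v₁ ∈ ({c, d} : Set V), ∃ v₂ ∈ ({y} : Set V), G.Adj v₁ v₂ := by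
      rcases M23 with ⟨-, h⟩ | ⟨h, -⟩
      · exact ⟨d, by simp, y, by simp, h⟩
      · exact ⟨c, by simp, y, by simp, h⟩
    have L34 : ∃ v₁ ∈ ({x} : Set V), ∃ v₂ ∈ ({y} : Set V), G.Adj v₁ v₂ :=
      ⟨x, by simp, y, by simp, Exy⟩
    have sym : ∀ {s u : Set V}, (∃ v₁ ∈ s, ∃ v₂ ∈ u, G.Adj v₁ v₂) →
        ∃ v₁ ∈ u, ∃ v₂ ∈ s, G.Adj v₁ v₂ := by
      rintro s u ⟨v₁, h₁, v₂, h₂, h⟩; exact ⟨v₂, h₂, v₁, h₁, h.symm⟩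
    fin_cases w₁ <;> fin_cases w₂ <;>
      simp only [Matrix.cons_val_zero, Matrix.cons_val_one, Matrix.head_cons,
        Matrix.cons_val_two, Matrix.tail_cons, Matrix.cons_val_three, Fin.isValue] <;>
      first
        | exact absurd rfl hw
        | exact L12 | exact L13 | exact L14 | exact L23 | exact L24 | exact L34
        | exact sym L12 | exact sym L13 | exact sym L14 | exact sym L23
        | exact sym L24 | exact sym L34
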